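/- Let p ≥ 3 be a prime and n a positive integer, and suppose the elementary p-group (Z_p)^n has the periodic tiling (PT) property. Then for every tile Ω of (Z_p)^n there exists a subgroup T of (Z_p)^n such that (Ω, T) is a tiling pair; in other words, every tile is a complete set of representatives of the cosets of some subgroup. -/

import Mathlib

/-- `(Ω, T)` is a tiling pair of the abelian group `G`: every element of `G`
has a unique representation `ω + t` with `ω ∈ Ω`, `t ∈ T`. -/
def IsTilingPair {G : Type*} [AddCommGroup G] (Ω T : Set G) : Prop :=
  ∀ g : G, ∃! p : G × G, p.1 ∈ Ω ∧ p.2 ∈ T ∧ p.1 + p.2 = g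

/-- A nonempty subset `A` of `G` is periodic if `A + g = A` for some nonzero `g`. -/
def IsPeriodic {G : Type*} [AddCommGroup G] (A : Set G) : Prop :=
  A.Nonempty ∧ ∃ g : G, g ≠ 0 ∧ (fun a => a + g) '' A = A

/-- `Ω` is a tile of `G` if it has a tiling complement. -/
def IsTile {G : Type*} [AddCommGroup G] (Ω : Set G) : Prop :=
  ∃ T : Set G, IsTilingPair Ω T

/-- `G` has the periodic tiling (PT) property: for every tiling pair `(Ω, T)`,
either `Ω` is periodic, or `T` can be replaced by a periodic tiling complement. -/
def HasPT (G : Type*) [AddCommGroup G] : Prop :=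
  ∀ Ω T : Set G, IsTilingPair Ω T →
    IsPeriodic Ω ∨ ∃ T' : Set G, IsPeriodic T' ∧ IsTilingPair Ω T'

/-- A tile `Ω` is uniformly periodic if all its tiling complements share a
common nonzero period. -/
def UniformlyPeriodic {G : Type*} [AddCommGroup G] (Ω : Set G) : Prop :=
  ∃ g : G, g ≠ 0 ∧ ∀ T : Set G, IsTilingPair Ω T → (fun t => t + g) '' T = T

/-- A tile `Ω` is dual uniformly periodic if there is a periodic tile `Ω'`
which is a tiling complement of every tiling complement of `Ω`. -/
def DualUniformlyPeriodic {G : Type*} [AddCommGroup G] (Ω : Set G) : Prop :=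
  ∃ Ω' : Set G, IsPeriodic Ω' ∧ IsTile Ω' ∧
    ∀ T : Set G, IsTilingPair Ω T → IsTilingPair Ω' T

/-- `G` has the uniformly periodic tiling (UPT) property: every tile of `G`
is either uniformly periodic or dual uniformly periodic. -/
def HasUPT (G : Type*) [AddCommGroup G] : Prop :=
  ∀ Ω : Set G, IsTile Ω → UniformlyPeriodic Ω ∨ DualUniformlyPeriodic Ω

/-!
Induction on `|G|`. By PT, a tiling pair `(Ω, T')` has a nonzero period `h` of `Ω` or of
`T'`; write `G ≃ M × ZMod p` with `h` corresponding to `(0, 1)`. If `Ω` is `h`-periodic it is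
`B × ZMod p` for a tile `B` of `M`; if `T'` is, then `Ω` projects injectively onto a tile of
`M`. Either way a subgroup complement in `M`, which exists by induction, lifts to one in `G`.

The induction needs PT for `M`. For a non-periodic tile `Ω` of `M` and `u ≠ 0`, the set which
is `Ω` on the slice `M × {0}` and `Ω + u` on the other slices tiles `M × ZMod p` and is not
periodic (as `p ≥ 3`), so it has a periodic complement `W`. Counting the representations of the
points of `{x} × ZMod p` gives `c x + (p - 1) c (x - u) = p`, where `c y` is the number of
representations `y = ω + w.1`; as `p ≥ 3` this forces `c ≡ 1`, so the projection of `W` to `M`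
is a periodic complement of `Ω`.
-/

open Set

theorem exists_ne_and_ne_of_three_le_card {α : Type*} [Finite α] (h : 3 ≤ Nat.card α)
    (a b : α) : ∃ c, c ≠ a ∧ c ≠ b := by
  have := Fintype.ofFinite α
  obtain ⟨x, y, z, hxy, hxz, hyz⟩ :=
    (Fintype.two_lt_card_iff (α := α)).1 (by rw [← Nat.card_eq_fintype_card]; omega)
  by_contra! hc
  rcases eq_or_ne x a with rfl | hx
  · exact hyz ((hc y hxy.symm).trans (hc z hxz.symm).symm)
  · rcases eq_or_ne y a with rfl | hy
    · exact hxz ((hc x hxy).trans (hc z hyz.symm).symm)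
    · exact hxy ((hc x hx).trans (hc y hy).symm)

section Tiling

variable {G G' : Type*} [AddCommGroup G] [AddCommGroup G']

theorem image_add_right_eq_self_iff {A : Set G} {g : G} :
    (fun a => a + g) '' A = A ↔ ∀ a, a + g ∈ A ↔ a ∈ A := by
  constructor
  · intro h a
    refine ⟨fun ha => ?_, fun ha => h ▸ mem_image_of_mem _ ha⟩
    rw [← h] at ha
    obtain ⟨b, hb, hba⟩ := ha
    rwa [← add_right_cancel hba]
  · intro h
    ext a
    refine ⟨?_, fun ha => ⟨a - g, (h _).1 (by simpa using ha), sub_add_cancel a g⟩⟩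
    rintro ⟨b, hb, rfl⟩
    exact (h b).2 hb

theorem add_nsmul_mem_iff {A : Set G} {g : G} (h : ∀ a, a + g ∈ A ↔ a ∈ A) (k : ℕ)
    (a : G) : a + k • g ∈ A ↔ a ∈ A := by
  induction k with
  | zero => simp
  | succ k ih => rw [succ_nsmul, ← add_assoc, h, ih]

theorem IsTilingPair.symm {Ω T : Set G} (h : IsTilingPair Ω T) : IsTilingPair T Ω := by
  intro g
  obtain ⟨⟨ω, t⟩, ⟨hω, ht, hωt⟩, hu⟩ := h g
  refine ⟨(t, ω), ⟨ht, hω, by rw [add_comm]; exact hωt⟩, ?_⟩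
  rintro ⟨t', ω'⟩ ⟨ht', hω', h'⟩
  have := hu (ω', t') ⟨hω', ht', by rw [add_comm]; exact h'⟩
  simp_all

theorem IsTilingPair.preimage (e : G' ≃+ G) {Ω T : Set G} (h : IsTilingPair Ω T) :
    IsTilingPair (e ⁻¹' Ω) (e ⁻¹' T) := by
  intro g
  obtain ⟨⟨ω, t⟩, ⟨hω, ht, hωt⟩, hu⟩ := h (e g)
  refine ⟨(e.symm ω, e.symm t), ⟨by simpa, by simpa, ?_⟩, ?_⟩
  · simp [← map_add, hωt]
  · rintro ⟨ω', t'⟩ ⟨hω', ht', h'⟩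
    have := hu (e ω', e t') ⟨hω', ht', by rw [← map_add, h']⟩
    simp only [Prod.mk.injEq] at this
    simp [← this.1, ← this.2]

theorem IsPeriodic.preimage (e : G' ≃+ G) {A : Set G} (h : IsPeriodic A) :
    IsPeriodic (e ⁻¹' A) := by
  obtain ⟨⟨a, ha⟩, g, hg, hgA⟩ := h
  refine ⟨⟨e.symm a, by simpa⟩, e.symm g, by simpa,
    image_add_right_eq_self_iff.2 fun b => ?_⟩
  simp [image_add_right_eq_self_iff.1 hgA]

theorem IsPeriodic.image_of_injOn (f : G →+ G') {A : Set G} (h : IsPeriodic A)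
    (hf : InjOn f A) : IsPeriodic (f '' A) := by
  obtain ⟨⟨a, ha⟩, g, hg, hgA⟩ := h
  have hag : a + g ∈ A := (image_add_right_eq_self_iff.1 hgA a).2 ha
  refine ⟨⟨f a, mem_image_of_mem f ha⟩, f g, fun h0 => hg ?_, ?_⟩
  · simpa using hf hag ha (by rw [map_add, h0, add_zero])
  · nth_rewrite 2 [← hgA]
    rw [image_image, image_image]
    simp [map_add]

theorem HasPT.of_addEquiv (e : G ≃+ G') (h : HasPT G) : HasPT G' := by
  intro Ω T hΩT
  rcases h _ _ (hΩT.preimage e) with hΩ | ⟨T', hT', hΩT'⟩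
  · left
    simpa [← preimage_comp] using hΩ.preimage e.symm
  · right
    exact ⟨_, hT'.preimage e.symm, by simpa [← preimage_comp] using hΩT'.preimage e.symm⟩

theorem HasPT.exists_period (hG : HasPT G) {Ω T : Set G} (h : IsTilingPair Ω T) :
    ∃ T' : Set G, ∃ g : G, IsTilingPair Ω T' ∧ g ≠ 0 ∧
      ((∀ a, a + g ∈ Ω ↔ a ∈ Ω) ∨ (∀ a, a + g ∈ T' ↔ a ∈ T')) := by
  rcases hG Ω T h with ⟨-, g, hg, hgΩ⟩ | ⟨T', ⟨-, g, hg, hgT'⟩, hΩT'⟩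
  · exact ⟨T, g, h, hg, Or.inl (image_add_right_eq_self_iff.1 hgΩ)⟩
  · exact ⟨T', g, hΩT', hg, Or.inr (image_add_right_eq_self_iff.1 hgT')⟩

end Tiling

section Product

variable {M K : Type*} [AddCommGroup M] [AddCommGroup K]

theorem IsTilingPair.prod {A S : Set M} {B T : Set K} (hA : IsTilingPair A S)
    (hB : IsTilingPair B T) : IsTilingPair (A ×ˢ B) (S ×ˢ T) := by
  intro g
  obtain ⟨⟨a, s⟩, ⟨ha, hs, has⟩, hu₁⟩ := hA g.1
  obtain ⟨⟨b, t⟩, ⟨hb, ht, hbt⟩, hu₂⟩ := hB g.2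
  refine ⟨((a, b), (s, t)), ⟨⟨ha, hb⟩, ⟨hs, ht⟩, Prod.ext has hbt⟩, ?_⟩
  rintro ⟨⟨a', b'⟩, ⟨s', t'⟩⟩ ⟨⟨ha', hb'⟩, ⟨hs', ht'⟩, h⟩
  have h₁ := hu₁ (a', s') ⟨ha', hs', congrArg Prod.fst h⟩
  have h₂ := hu₂ (b', t') ⟨hb', ht', congrArg Prod.snd h⟩
  simp_all

theorem isTilingPair_univ_zero : IsTilingPair (univ : Set K) {0} :=
  fun g => ⟨(g, 0), by simp, fun q ⟨_, hq, hqg⟩ => by simp_all [Prod.ext_iff]⟩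

theorem IsTilingPair.of_prod_univ {B : Set M} {T : Set (M × K)}
    (h : IsTilingPair (B ×ˢ (univ : Set K)) T) : IsTilingPair B (Prod.fst '' T) := by
  intro m
  obtain ⟨⟨q, t⟩, ⟨hq, ht, hqt⟩, hu⟩ := h (m, 0)
  refine ⟨(q.1, t.1), ⟨hq.1, mem_image_of_mem _ ht, congrArg Prod.fst hqt⟩, ?_⟩
  rintro ⟨b, _⟩ ⟨hb, ⟨t', ht', rfl⟩, hbt⟩
  obtain ⟨rfl, rfl⟩ :=
    Prod.mk.inj (hu ((b, -t'.2), t') ⟨⟨hb, trivial⟩, ht', Prod.ext hbt (by simp)⟩)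
  rfl

theorem IsTilingPair.injOn_fst {A : Set (M × K)} {C : Set M}
    (h : IsTilingPair A (C ×ˢ (univ : Set K))) : InjOn Prod.fst A := by
  intro a ha a' ha' he
  obtain ⟨⟨_, t⟩, ⟨_, ht, _⟩, _⟩ := h 0
  have ht' : t + (a - a') ∈ C ×ˢ (univ : Set K) := ⟨by simpa [he] using ht.1, trivial⟩
  have := (h (a + t)).unique (y₁ := (a, t)) (y₂ := (a', t + (a - a'))) ⟨ha, ht, rfl⟩
    ⟨ha', ht', show a' + (t + (a - a')) = a + t by abel⟩
  exact congrArg Prod.fst this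

theorem IsTilingPair.prod_univ_of_injOn {A : Set (M × K)} {S : Set M} (hinj : InjOn Prod.fst A)
    (h : IsTilingPair (Prod.fst '' A) S) : IsTilingPair A (S ×ˢ (univ : Set K)) := by
  intro g
  obtain ⟨⟨-, s⟩, ⟨⟨a, ha, rfl⟩, hs, has⟩, hu⟩ := h g.1
  refine ⟨(a, g - a), ⟨ha, ⟨by simpa [← has], trivial⟩, add_sub_cancel a g⟩, ?_⟩
  rintro ⟨a', t'⟩ ⟨ha', ⟨hs', -⟩, h'⟩
  have := hu (a'.1, t'.1) ⟨mem_image_of_mem _ ha', hs', congrArg Prod.fst h'⟩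
  have ha'a : a'.1 = a.1 := (Prod.mk.inj this).1
  obtain rfl : a' = a := hinj ha' ha ha'a
  simp [← h']

end Product

def HasSubgroupComplements (G : Type*) [AddCommGroup G] : Prop :=
  ∀ Ω : Set G, IsTile Ω → ∃ T : AddSubgroup G, IsTilingPair Ω T

namespace HasSubgroupComplements

variable {G M K : Type*} [AddCommGroup G] [AddCommGroup M] [AddCommGroup K]

theorem of_subsingleton [Subsingleton G] : HasSubgroupComplements G := by
  rintro Ω ⟨T, h⟩
  refine ⟨⊥, fun g => ?_⟩
  obtain ⟨q, ⟨hq₁, -, -⟩, -⟩ := h g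
  exact ⟨q, ⟨hq₁, Subsingleton.elim _ _, Subsingleton.elim _ _⟩,
    fun _ _ => Subsingleton.elim _ _⟩

theorem exists_isTilingPair_prod_univ (hM : HasSubgroupComplements M) {B : Set M}
    {T : Set (M × K)} (h : IsTilingPair (B ×ˢ (univ : Set K)) T) :
    ∃ S : AddSubgroup (M × K), IsTilingPair (B ×ˢ (univ : Set K)) S := by
  obtain ⟨S, hS⟩ := hM B ⟨_, h.of_prod_univ⟩
  exact ⟨S.prod ⊥, by simpa [AddSubgroup.coe_prod] using hS.prod isTilingPair_univ_zero⟩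

theorem exists_isTilingPair_of_isTilingPair_prod_univ (hM : HasSubgroupComplements M)
    {A : Set (M × K)} {C : Set M} (h : IsTilingPair A (C ×ˢ (univ : Set K))) :
    ∃ S : AddSubgroup (M × K), IsTilingPair A S := by
  obtain ⟨S, hS⟩ := hM _ ⟨_, h.symm.of_prod_univ.symm⟩
  exact ⟨S.prod ⊤, by
    simpa [AddSubgroup.coe_prod] using IsTilingPair.prod_univ_of_injOn h.injOn_fst hS⟩

end HasSubgroupComplements

section Descent

variable {M K : Type*} [AddCommGroup M]

def twistedProd (Ω : Set M) (v : K → M) : Set (M × K) := {q | q.1 - v q.2 ∈ Ω}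

def fstRepr (Ω : Set M) (W : Set (M × K)) (y : M) : Set (M × (M × K)) :=
  {r | r.1 ∈ Ω ∧ r.2 ∈ W ∧ r.1 + r.2.1 = y}

variable {Ω : Set M} {W : Set (M × K)}

theorem isTilingPair_image_fst_of_card_fstRepr (h : ∀ y, Nat.card (fstRepr Ω W y) = 1) :
    IsTilingPair Ω (Prod.fst '' W) ∧ InjOn Prod.fst W := by
  have hr : ∀ y, ∃ r, fstRepr Ω W y = {r} := fun y => by
    rw [← ncard_eq_one, ← Nat.card_coe_set_eq]
    exact h y
  constructor
  · intro y
    obtain ⟨⟨ω, w⟩, hy⟩ := hr y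
    obtain ⟨hω, hw, hωw⟩ : (ω, w) ∈ fstRepr Ω W y := hy ▸ mem_singleton _
    refine ⟨(ω, w.1), ⟨hω, mem_image_of_mem _ hw, hωw⟩, ?_⟩
    rintro ⟨ω', _⟩ ⟨hω', ⟨w', hw', rfl⟩, h'⟩
    have : (ω', w') ∈ fstRepr Ω W y := ⟨hω', hw', h'⟩
    rw [hy, mem_singleton_iff, Prod.mk.injEq] at this
    rw [this.1, this.2]
  · intro w₁ hw₁ w₂ hw₂ he
    obtain ⟨⟨ω, w⟩, h0⟩ := hr 0
    obtain ⟨hω, -⟩ : (ω, w) ∈ fstRepr Ω W 0 := h0 ▸ mem_singleton _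
    obtain ⟨r, hr'⟩ := hr (ω + w₁.1)
    have h₁ : (ω, w₁) ∈ fstRepr Ω W (ω + w₁.1) := ⟨hω, hw₁, rfl⟩
    have h₂ : (ω, w₂) ∈ fstRepr Ω W (ω + w₁.1) := ⟨hω, hw₂, by rw [he]⟩
    rw [hr', mem_singleton_iff] at h₁ h₂
    exact congrArg Prod.snd (h₁.trans h₂.symm)

variable [AddCommGroup K]

theorem IsTilingPair.twistedProd {T : Set M} (h : IsTilingPair Ω T) (v : K → M) :
    IsTilingPair (twistedProd Ω v) (T ×ˢ {0}) := by
  intro g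
  obtain ⟨⟨ω, t⟩, ⟨hω, ht, hωt⟩, hu⟩ := h (g.1 - v g.2)
  refine ⟨((ω + v g.2, g.2), (t, 0)),
    ⟨by simpa [_root_.twistedProd], ⟨ht, rfl⟩, ?_⟩, ?_⟩
  · ext
    · simp only [Prod.fst_add]
      rw [add_right_comm, hωt, sub_add_cancel]
    · simp
  · rintro ⟨q, t'⟩ ⟨hq, ⟨ht', ht'0 : t'.2 = 0⟩, hqt⟩
    have h₁ : q.1 + t'.1 = g.1 := congrArg Prod.fst hqt
    have h₂ : q.2 = g.2 := by simpa [ht'0] using congrArg Prod.snd hqt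
    obtain ⟨rfl, rfl⟩ := Prod.mk.inj (hu (q.1 - v q.2, t'.1)
      ⟨hq, ht', show q.1 - v q.2 + t'.1 = g.1 - v g.2 by rw [← h₂, ← h₁]; abel⟩)
    ext <;> simp [h₂, ht'0]

theorem not_isPeriodic_twistedProd [Finite K] (hK : 3 ≤ Nat.card K) (hΩ : ¬ IsPeriodic Ω)
    {u : M} (hu : u ≠ 0) :
    ¬ IsPeriodic (twistedProd Ω (({0}ᶜ : Set K).indicator fun _ => u)) := by
  set v : K → M := ({0}ᶜ : Set K).indicator fun _ => u
  rintro ⟨⟨q, hq⟩, g, hg, hgA⟩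
  rw [image_add_right_eq_self_iff] at hgA
  have hshift : ∀ b, v (b + g.2) = v b + g.1 := by
    intro b
    by_contra hne
    refine hΩ ⟨⟨_, hq⟩, v b + g.1 - v (b + g.2), sub_ne_zero.2 (Ne.symm hne),
      image_add_right_eq_self_iff.2 fun m => ?_⟩
    have := hgA (m + v b, b)
    simp only [_root_.twistedProd, mem_ofPred_eq, Prod.fst_add, Prod.snd_add,
      add_sub_cancel_right] at this
    rw [← this]
    abel_nf
  have hg₁ : g.1 = v g.2 := by simpa [v] using (hshift 0).symm
  rcases eq_or_ne g.2 0 with hg₂ | hg₂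
  · exact hg (Prod.ext (by simpa [v, hg₂] using hg₁) hg₂)
  · obtain ⟨b, hb, hbg⟩ := exists_ne_and_ne_of_three_le_card hK 0 (-g.2)
    have hbg' : b + g.2 ≠ 0 := by rwa [Ne, add_eq_zero_iff_eq_neg]
    have := hshift b
    simp [v, hb, hbg', hg₁, hg₂] at this
    exact hu this

theorem sum_card_fstRepr [Finite M] [Fintype K] {v : K → M}
    (hW : IsTilingPair (twistedProd Ω v) W) (x : M) :
    ∑ b, Nat.card (fstRepr Ω W (x - v b)) = Nat.card K := by
  rw [← Nat.card_sigma]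
  refine Nat.card_eq_of_bijective (fun r => r.1 + (r.2 : M × (M × K)).2.2) ⟨?_, fun k => ?_⟩
  · rintro ⟨b, ⟨ω, w⟩, hω, hw, hx⟩ ⟨b', ⟨ω', w'⟩, hω', hw', hx'⟩ h
    have hrep : ∀ b ω (w : M × K), ω + w.1 = x - v b →
        ((ω + v b, b) : M × K) + w = (x, b + w.2) := fun b ω w h => by
      ext
      · simp only [Prod.fst_add]
        rw [add_right_comm, h, sub_add_cancel]
      · rfl
    have := (hW (x, b + w.2)).unique (y₁ := ((ω + v b, b), w)) (y₂ := ((ω' + v b', b'), w'))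
      ⟨by simpa [twistedProd], hw, hrep b ω w hx⟩
      ⟨by simpa [twistedProd], hw', by rw [hrep b' ω' w' hx']; exact congrArg _ h.symm⟩
    simp only [Prod.mk.injEq] at this
    obtain ⟨⟨hωb, rfl⟩, rfl⟩ := this
    obtain rfl := add_right_cancel hωb
    rfl
  · obtain ⟨⟨q, w⟩, ⟨hq, hw, hqw⟩, -⟩ := hW (x, k)
    refine ⟨⟨q.2, (q.1 - v q.2, w), hq, hw, ?_⟩, congrArg Prod.snd hqw⟩
    show q.1 - v q.2 + w.1 = x - v q.2
    rw [sub_add_eq_add_sub]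
    exact congrArg (· - v q.2) (congrArg Prod.fst hqw)

theorem card_fstRepr_eq_one [Finite M] [Finite K] (hK : 3 ≤ Nat.card K) {u : M}
    (hW : IsTilingPair (twistedProd Ω (({0}ᶜ : Set K).indicator fun _ => u)) W) (y : M) :
    Nat.card (fstRepr Ω W y) = 1 := by
  classical
  have := Fintype.ofFinite K
  have key : ∀ x, Nat.card (fstRepr Ω W x) + (Nat.card K - 1) * Nat.card (fstRepr Ω W (x - u))
      = Nat.card K := by
    intro x
    refine Eq.trans ?_ (sum_card_fstRepr hW x)
    rw [← Finset.add_sum_erase _ _ (Finset.mem_univ 0),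
      Finset.sum_congr rfl (g := fun _ => Nat.card (fstRepr Ω W (x - u)))]
    · simp [Finset.card_erase_of_mem, Nat.card_eq_fintype_card]
    · intro b hb
      rw [indicator_of_mem (Finset.ne_of_mem_erase hb)]
  have hle : ∀ y, Nat.card (fstRepr Ω W y) ≤ 1 := fun y => by
    have := key (y + u)
    rw [add_sub_cancel_right] at this
    by_contra! h2
    have := Nat.mul_le_mul_left (Nat.card K - 1) h2
    omega
  have := key (y + u)
  rw [add_sub_cancel_right] at this
  have := hle (y + u)
  have := hle y
  interval_cases Nat.card (fstRepr Ω W y) <;> omega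

theorem HasPT.of_prod [Finite M] [Nontrivial M] [Finite K] (hK : 3 ≤ Nat.card K)
    (h : HasPT (M × K)) : HasPT M := by
  intro Ω T hΩT
  refine or_iff_not_imp_left.2 fun hΩ => ?_
  obtain ⟨u, hu⟩ := exists_ne (0 : M)
  rcases h _ _ (hΩT.twistedProd (({0}ᶜ : Set K).indicator fun _ => u)) with
    hper | ⟨W, hW, hΩW⟩
  · exact absurd hper (not_isPeriodic_twistedProd hK hΩ hu)
  · obtain ⟨hΩW', hinj⟩ :=
      isTilingPair_image_fst_of_card_fstRepr (card_fstRepr_eq_one hK hΩW)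
    exact ⟨_, hW.image_of_injOn (AddMonoidHom.fst M K) hinj, hΩW'⟩

end Descent

theorem exists_linearEquiv_prod_of_ne_zero {K V : Type*} [Field K] [AddCommGroup V]
    [Module K V] {g : V} (hg : g ≠ 0) :
    ∃ (M : Submodule K V) (e : (M × K) ≃ₗ[K] V), e (0, 1) = g := by
  obtain ⟨M, hM⟩ := (K ∙ g).exists_isCompl
  refine ⟨M, ((LinearEquiv.refl K M).prodCongr
    (LinearEquiv.toSpanNonzeroSingleton K V g hg)).trans
    (Submodule.prodEquivOfIsCompl M _ hM.symm), ?_⟩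
  simp [Submodule.coe_prodEquivOfIsCompl']

theorem preimage_eq_prod_univ {M G : Type*} [AddCommGroup M] [AddCommGroup G] {n : ℕ}
    [NeZero n] (e : M × ZMod n ≃+ G) {A : Set G} (h : ∀ a, a + e (0, 1) ∈ A ↔ a ∈ A) :
    e ⁻¹' A = {m | e (m, 0) ∈ A} ×ˢ univ := by
  ext ⟨m, c⟩
  have : (m, c) = (m, 0) + c.val • ((0, 1) : M × ZMod n) := by ext <;> simp
  rw [mem_preimage, this, map_add, map_nsmul, add_nsmul_mem_iff h]
  simp

theorem HasSubgroupComplements.exists_isTilingPair_of_period {M G : Type*} [AddCommGroup M]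
    [AddCommGroup G] {n : ℕ} [NeZero n] (hM : HasSubgroupComplements M) (e : M × ZMod n ≃+ G)
    {Ω T : Set G} (h : IsTilingPair Ω T)
    (hper : (∀ a, a + e (0, 1) ∈ Ω ↔ a ∈ Ω) ∨ (∀ a, a + e (0, 1) ∈ T ↔ a ∈ T)) :
    ∃ S : AddSubgroup G, IsTilingPair Ω S := by
  suffices ∃ S : AddSubgroup (M × ZMod n), IsTilingPair (e ⁻¹' Ω) S by
    obtain ⟨S, hS⟩ := this
    exact ⟨S.comap e.symm.toAddMonoidHom, by simpa [← preimage_comp] using hS.preimage e.symm⟩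
  have h' := h.preimage e
  rcases hper with hΩ | hT
  · rw [preimage_eq_prod_univ e hΩ] at h' ⊢
    exact hM.exists_isTilingPair_prod_univ h'
  · rw [preimage_eq_prod_univ e hT] at h'
    exact hM.exists_isTilingPair_of_isTilingPair_prod_univ h'

theorem hasSubgroupComplements_of_hasPT {p : ℕ} [Fact p.Prime] (hp3 : 3 ≤ p) {G : Type*}
    [AddCommGroup G] [Module (ZMod p) G] [Finite G] (hG : HasPT G) : HasSubgroupComplements G := by
  induction hN : Nat.card G using Nat.strong_induction_on generalizing G with
  | _ N ih =>
  rintro Ω ⟨T, hΩT⟩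
  obtain ⟨T', g, hΩT', hg, hper⟩ := hG.exists_period hΩT
  obtain ⟨M, e, rfl⟩ := exists_linearEquiv_prod_of_ne_zero (K := ZMod p) hg
  have hcard : Nat.card G = Nat.card M * p := by
    rw [← Nat.card_congr e.toEquiv, Nat.card_prod, Nat.card_zmod]
  have hM : HasSubgroupComplements M := by
    rcases subsingleton_or_nontrivial M with hM | hM
    · exact .of_subsingleton
    · have : 0 < Nat.card M := Nat.card_pos
      refine ih _ (by nlinarith) ((hG.of_addEquiv e.symm.toAddEquiv).of_prod ?_) rfl
      rwa [Nat.card_zmod]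
  exact hM.exists_isTilingPair_of_period e.toAddEquiv hΩT' hper

theorem tile_compl_subgroup_of_hasPT_general (p : ℕ) (hp : p.Prime) (hp3 : 3 ≤ p)
    (n : ℕ) (hPT : HasPT (Fin n → ZMod p))
    (Ω : Set (Fin n → ZMod p)) (hΩ : IsTile Ω) :
    ∃ T : AddSubgroup (Fin n → ZMod p), IsTilingPair Ω (T : Set (Fin n → ZMod p)) :=
  have : Fact p.Prime := ⟨hp⟩
  hasSubgroupComplements_of_hasPT hp3 hPT Ω hΩ

/-- In an elementary `p`-group (`p ≥ 3`) with the PT property, every tile has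
a subgroup as a tiling complement. -/
theorem tile_compl_subgroup_of_hasPT (p : ℕ) (hp : p.Prime) (hp3 : 3 ≤ p)
    (n : ℕ) (hn : 1 ≤ n) (hPT : HasPT (Fin n → ZMod p))
    (Ω : Set (Fin n → ZMod p)) (hΩ : IsTile Ω) :
    ∃ T : AddSubgroup (Fin n → ZMod p), IsTilingPair Ω (T : Set (Fin n → ZMod p)) :=
  tile_compl_subgroup_of_hasPT_general p hp hp3 n hPT Ω hΩ
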